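/- Let λ : ℝ → ℝ be infinitely differentiable and let c ∈ ℝ be a constant such that λ''(x) = 2λ(x)³ + 2xλ(x) + c for all x ∈ ℝ (the second Painlevé equation P2). Define μ : ℝ → ℝ by μ(x) = −λ(x)² + λ'(x). Then μ'''(x) = −6μ(x)μ'(x) + 2xμ'(x) + 4μ(x) for all x ∈ ℝ, i.e. μ solves the thirty-fourth Painlevé equation P34. -/

import Mathlib

/-- if `λ` solves the second Painlevé equation `λ'' = 2λ³ + 2xλ + c`, then
`μ = −λ² + λ'` solves the thirty-fourth Painlevé equation
`μ''' = −6μμ' + 2xμ' + 4μ`. -/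
theorem stmt_6 (l m : ℝ → ℝ) (hl : ContDiff ℝ (⊤ : ℕ∞) l) (c : ℝ)
    (hP2 : ∀ x : ℝ, deriv (deriv l) x = 2 * l x ^ 3 + 2 * x * l x + c)
    (hm : ∀ x : ℝ, m x = -(l x) ^ 2 + deriv l x) :
    ∀ x : ℝ, deriv (deriv (deriv m)) x
      = -6 * m x * deriv m x + 2 * x * deriv m x + 4 * m x := by
  have hl1 : Differentiable ℝ l := hl.differentiable (by simp)
  have hi : ContDiff ℝ ((⊤ : ℕ∞) : WithTop ℕ∞) l := hl.of_le (by simp)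
  have hl'1 : Differentiable ℝ (deriv l) :=
    ((contDiff_infty_iff_deriv.mp hi).2).differentiable (by simp)
  have Hl : ∀ x, HasDerivAt l (deriv l x) x := fun x => (hl1 x).hasDerivAt
  have Hl' : ∀ x, HasDerivAt (deriv l) (2 * l x ^ 3 + 2 * x * l x + c) x := fun x => by
    have h := (hl'1 x).hasDerivAt
    rwa [hP2] at h
  have hmE : m = fun y => -(l y) ^ 2 + deriv l y := funext hm
  -- first derivative of m
  have D1 : ∀ x, HasDerivAt m
      (-(2 * l x * deriv l x) + (2 * l x ^ 3 + 2 * x * l x + c)) x := fun x => by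
    rw [hmE]
    have h := (((Hl x).pow 2).neg).add (Hl' x)
    refine h.congr_deriv ?_
    push_cast
    ring
  have E1 : deriv m = fun x => -(2 * l x * deriv l x) + (2 * l x ^ 3 + 2 * x * l x + c) :=
    funext fun x => (D1 x).deriv
  -- second derivative of m
  have D2 : ∀ x, HasDerivAt (deriv m)
      (-(2 * (deriv l x * deriv l x + l x * (2 * l x ^ 3 + 2 * x * l x + c)))
        + (6 * l x ^ 2 * deriv l x + (2 * l x + 2 * x * deriv l x))) x := fun x => by
    rw [E1]
    have h := ((((Hl x).const_mul (2 : ℝ)).mul (Hl' x)).neg).add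
      ((((((Hl x).pow 3).const_mul (2 : ℝ))).add
        (((hasDerivAt_id x).const_mul (2 : ℝ)).mul (Hl x))).add_const c)
    simp only [id_eq] at h
    refine h.congr_deriv ?_
    push_cast
    ring
  have E2 : deriv (deriv m) = fun x =>
      -(2 * (deriv l x * deriv l x + l x * (2 * l x ^ 3 + 2 * x * l x + c)))
        + (6 * l x ^ 2 * deriv l x + (2 * l x + 2 * x * deriv l x)) :=
    funext fun x => (D2 x).deriv
  -- third derivative of m
  intro x
  have D3 : HasDerivAt (deriv (deriv m))
      (-6 * (-(l x) ^ 2 + deriv l x)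
          * (-(2 * l x * deriv l x) + (2 * l x ^ 3 + 2 * x * l x + c))
        + 2 * x * (-(2 * l x * deriv l x) + (2 * l x ^ 3 + 2 * x * l x + c))
        + 4 * (-(l x) ^ 2 + deriv l x)) x := by
    rw [E2]
    have hg := (((((Hl x).pow 3).const_mul (2 : ℝ))).add
      (((hasDerivAt_id x).const_mul (2 : ℝ)).mul (Hl x))).add_const c
    have h := (((((Hl' x).mul (Hl' x)).add ((Hl x).mul hg)).const_mul (2 : ℝ)).neg).add
      (((((Hl x).pow 2).const_mul (6 : ℝ)).mul (Hl' x)).add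
        (((Hl x).const_mul (2 : ℝ)).add
          (((hasDerivAt_id x).const_mul (2 : ℝ)).mul (Hl' x))))
    simp only [id_eq] at h
    refine h.congr_deriv ?_
    push_cast [Pi.add_apply, Pi.mul_apply, Pi.pow_apply]
    ring
  rw [D3.deriv, hm x, (D1 x).deriv]
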